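/- The semigroup defined by the presentation ⟨a, b, c | ab = b², ba = a², ac = c², ca = a², bc = c², cb = b²⟩ is the disjoint union of the free monogenic subsemigroups ⟨a⟩, ⟨b⟩, ⟨c⟩ (pairwise disjoint and each infinite, with union the whole semigroup). -/

import Mathlib

/-! The relations say `x * y = y * y` for any two generators `x`, `y`, so every word equals the
power of its last letter whose exponent is the length of the word. Both invariants survive the
relations: the length, a homomorphism to `Multiplicative ℕ`, shows that each generator has
infinite order, and the last letter, a homomorphism to the right-zero semigroup on the
generators, separates the three monogenic subsemigroups. -/

/-- `pw a n` is `a ^ n` for `n ≥ 1` (with junk value `a` at `n = 0`),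
defined in any magma. -/
def pw {S : Type*} [Mul S] (a : S) : ℕ → S
  | 0 => a
  | 1 => a
  | n + 2 => pw a (n + 1) * a

/-- The monogenic subsemigroup `⟨a⟩ = {a^n : n ≥ 1}`. -/
def genSet {S : Type*} [Mul S] (a : S) : Set S := {x | ∃ n, 1 ≤ n ∧ pw a n = x}

/-- `a` has infinite order: its positive powers are pairwise distinct,
i.e. `⟨a⟩` is free monogenic. -/
def InfOrder {S : Type*} [Mul S] (a : S) : Prop :=
  ∀ m n : ℕ, 1 ≤ m → 1 ≤ n → pw a m = pw a n → m = n

namespace Stmt19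

def A : FreeSemigroup (Fin 3) := FreeSemigroup.of 0
def B : FreeSemigroup (Fin 3) := FreeSemigroup.of 1
def C : FreeSemigroup (Fin 3) := FreeSemigroup.of 2

/-- The relations `ab = b²`, `ba = a²`, `ac = c²`, `ca = a²`, `bc = c²`, `cb = b²`. -/
def rel : FreeSemigroup (Fin 3) → FreeSemigroup (Fin 3) → Prop := fun u v =>
  (u = A * B ∧ v = pw B 2) ∨ (u = B * A ∧ v = pw A 2) ∨
  (u = A * C ∧ v = pw C 2) ∨ (u = C * A ∧ v = pw A 2) ∨
  (u = B * C ∧ v = pw C 2) ∨ (u = C * B ∧ v = pw B 2)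

/-- The semigroup defined by the presentation
`⟨a, b, c | ab = b², ba = a², ac = c², ca = a², bc = c², cb = b²⟩`. -/
def Sem := (conGen rel).Quotient

instance : Semigroup Sem := inferInstanceAs (Semigroup (conGen rel).Quotient)

def a' : Sem := (A : (conGen rel).Quotient)
def b' : Sem := (B : (conGen rel).Quotient)
def c' : Sem := (C : (conGen rel).Quotient)

end Stmt19

section Powers

variable {S T F : Type*}

lemma pw_succ [Mul S] (a : S) {n : ℕ} (hn : 1 ≤ n) : pw a (n + 1) = pw a n * a := by
  obtain ⟨k, rfl⟩ := Nat.exists_eq_add_of_le' hn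
  rfl

lemma map_pw [Mul S] [Mul T] [FunLike F S T] [MulHomClass F S T] (f : F) (a : S) :
    ∀ n, f (pw a n) = pw (f a) n
  | 0 => rfl
  | 1 => rfl
  | n + 2 => by rw [pw, map_mul, map_pw f a (n + 1), ← pw]

lemma InfOrder.of_map [Mul S] [Mul T] [FunLike F S T] [MulHomClass F S T] (f : F) {a : S}
    (h : InfOrder (f a)) : InfOrder a :=
  fun m n hm hn hmn => h m n hm hn (by rw [← map_pw, ← map_pw, hmn])

lemma genSet_inter_eq_empty_of_map [Mul S] [Mul T] [FunLike F S T] [MulHomClass F S T] (f : F)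
    {a b : S} (h : genSet (f a) ∩ genSet (f b) = ∅) : genSet a ∩ genSet b = ∅ := by
  refine Set.eq_empty_of_forall_notMem fun x ⟨⟨m, hm, hxa⟩, ⟨n, hn, hxb⟩⟩ => ?_
  refine h.subset ⟨⟨m, hm, rfl⟩, ⟨n, hn, ?_⟩⟩
  rw [← map_pw, ← map_pw, hxa, hxb]

lemma pw_mul_of_mul_eq_mul_self [Semigroup S] {x y : S} (hxy : x * y = y * y) :
    ∀ {m : ℕ}, 1 ≤ m → pw x m * y = pw y (m + 1)
  | 1, _ => hxy
  | m + 2, _ =>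
    calc pw x (m + 2) * y = pw x (m + 1) * y * y := by rw [pw, mul_assoc, hxy, ← mul_assoc]
      _ = pw y (m + 3) := by rw [pw_mul_of_mul_eq_mul_self hxy (by omega)]; rfl

lemma pw_mul_pw_of_mul_eq_mul_self [Semigroup S] {x y : S} (hxy : x * y = y * y) {m : ℕ}
    (hm : 1 ≤ m) : ∀ {n : ℕ}, 1 ≤ n → pw x m * pw y n = pw y (m + n)
  | 1, _ => pw_mul_of_mul_eq_mul_self hxy hm
  | n + 2, _ =>
    calc pw x m * pw y (n + 2) = pw x m * pw y (n + 1) * y := by rw [pw, mul_assoc]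
      _ = pw y (m + (n + 2)) := by
        rw [pw_mul_pw_of_mul_eq_mul_self hxy hm (by omega), ← pw_succ _ (by omega)]
        rfl

lemma exists_mem_genSet_lift {ι : Type*} [Semigroup S] (g : ι → S)
    (hg : ∀ i j, g i * g j = g j * g j) (w : FreeSemigroup ι) :
    ∃ i, FreeSemigroup.lift g w ∈ genSet (g i) := by
  induction w using FreeSemigroup.recOnMul with
  | ih1 i => exact ⟨i, 1, le_rfl, rfl⟩
  | ih2 i w _ hw =>
    obtain ⟨j, n, hn, hwj⟩ := hw
    refine ⟨j, 1 + n, by omega, ?_⟩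
    rw [FreeSemigroup.lift_of_mul, ← hwj]
    exact (pw_mul_pw_of_mul_eq_mul_self (hg i j) le_rfl hn).symm

end Powers

lemma pw_ofAdd_one {n : ℕ} (hn : 1 ≤ n) :
    pw (Multiplicative.ofAdd 1 : Multiplicative ℕ) n = Multiplicative.ofAdd n := by
  induction n, hn using Nat.le_induction with
  | base => rfl
  | succ n hn ih => rw [pw_succ _ hn, ih]; rfl

lemma infOrder_ofAdd_one : InfOrder (Multiplicative.ofAdd 1 : Multiplicative ℕ) :=
  fun m n hm hn h => by rwa [pw_ofAdd_one hm, pw_ofAdd_one hn, EmbeddingLike.apply_eq_iff_eq] at h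

section RightZero

variable {α : Type*}

def RightZero (α : Type*) := α

instance : Semigroup (RightZero α) where
  mul _ y := y
  mul_assoc _ _ _ := rfl

lemma RightZero.genSet_eq (x : RightZero α) : genSet x = {x} := by
  have pw_eq : ∀ n, pw x n = x
    | 0 => rfl
    | 1 => rfl
    | _ + 2 => rfl
  ext y
  simp only [genSet, pw_eq, Set.mem_ofPred_eq, Set.mem_singleton_iff]
  exact ⟨fun ⟨_, _, h⟩ => h.symm, fun h => ⟨1, le_rfl, h.symm⟩⟩

lemma RightZero.genSet_inter_eq_empty {x y : RightZero α} (hxy : x ≠ y) :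
    genSet x ∩ genSet y = ∅ := by
  rw [genSet_eq, genSet_eq, Set.singleton_inter_eq_empty, Set.mem_singleton_iff]
  exact hxy

end RightZero

namespace Stmt19

def gen (i : Fin 3) : Sem := (FreeSemigroup.of i : (conGen rel).Quotient)

lemma gen_mul_gen (i j : Fin 3) : gen i * gen j = gen j * gen j := by
  fin_cases i <;> fin_cases j <;> first
    | rfl
    | exact (Con.eq (conGen rel)).2 (ConGen.Rel.of _ _ (by unfold rel A B C; tauto))

lemma lift_gen_eq_mkMulHom : FreeSemigroup.lift gen = Con.mkMulHom (conGen rel) :=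
  FreeSemigroup.lift_comp_of' (Con.mkMulHom (conGen rel))

lemma conGen_rel_le_ker_lift {T : Type*} [Semigroup T] {φ : Fin 3 → T}
    (hφ : ∀ i j, φ i * φ j = φ j * φ j) : conGen rel ≤ Con.ker (FreeSemigroup.lift φ) := by
  refine Con.conGen_le.2 fun u v huv => ?_
  rcases huv with ⟨rfl, rfl⟩ | ⟨rfl, rfl⟩ | ⟨rfl, rfl⟩ | ⟨rfl, rfl⟩ | ⟨rfl, rfl⟩ | ⟨rfl, rfl⟩ <;>
    exact hφ _ _

def Sem.lift {T : Type*} [Semigroup T] (φ : Fin 3 → T) (hφ : ∀ i j, φ i * φ j = φ j * φ j) :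
    Sem →ₙ* T where
  toFun x := Con.liftOn x (FreeSemigroup.lift φ) fun _ _ h =>
    Con.le_def.1 (conGen_rel_le_ker_lift hφ) h
  map_mul' x y := Con.induction_on₂ x y fun u v => map_mul (FreeSemigroup.lift φ) u v

lemma infOrder_gen (i : Fin 3) : InfOrder (gen i) :=
  InfOrder.of_map (Sem.lift (fun _ => Multiplicative.ofAdd (1 : ℕ)) fun _ _ => rfl)
    infOrder_ofAdd_one

lemma genSet_gen_inter_eq_empty {i j : Fin 3} (hij : i ≠ j) :
    genSet (gen i) ∩ genSet (gen j) = ∅ :=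
  genSet_inter_eq_empty_of_map (Sem.lift (T := RightZero (Fin 3)) id fun _ _ => rfl)
    (RightZero.genSet_inter_eq_empty hij)

lemma exists_mem_genSet_gen (x : Sem) : ∃ i, x ∈ genSet (gen i) := by
  induction x using Con.induction_on with
  | H w =>
    obtain ⟨i, hi⟩ := exists_mem_genSet_lift gen gen_mul_gen w
    exact ⟨i, by rwa [lift_gen_eq_mkMulHom] at hi⟩

/-- The presented semigroup is the disjoint union of the free monogenic
subsemigroups `⟨a⟩`, `⟨b⟩`, `⟨c⟩`: each is infinite (the generators have
infinite order), they are pairwise disjoint, and their union is everything. -/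
theorem stmt_19 :
    InfOrder a' ∧ InfOrder b' ∧ InfOrder c' ∧
      genSet a' ∩ genSet b' = ∅ ∧ genSet a' ∩ genSet c' = ∅ ∧
      genSet b' ∩ genSet c' = ∅ ∧
      genSet a' ∪ genSet b' ∪ genSet c' = Set.univ := by
  refine ⟨infOrder_gen 0, infOrder_gen 1, infOrder_gen 2, genSet_gen_inter_eq_empty (by decide),
    genSet_gen_inter_eq_empty (by decide), genSet_gen_inter_eq_empty (by decide), ?_⟩
  refine Set.eq_univ_of_forall fun x => ?_
  obtain ⟨i, hi⟩ := exists_mem_genSet_gen x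
  fin_cases i
  · exact Or.inl (Or.inl hi)
  · exact Or.inl (Or.inr hi)
  · exact Or.inr hi

end Stmt19
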